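/- arXiv:2505.03976 — 7 statements merged into one kernel-verified Lean document; each statement's English description precedes it below -/
import Mathlib

section
/- Let G be a finite group, p a prime, and q a power of p such that |G|_p divides q and q ≡ 1 mod |G|_{p'}. Then for every x ∈ G, the number of y ∈ G with y^q = x equals 0 if x is p-singular, and equals the number of p-elements of C_G(x) if x is p-regular. -/
/-!
Write `|G| = ordProj[p] |G| * ordCompl[p] |G|`. Since the `p`-part divides `q` and `q` is a unit
modulo the `p'`-part, `z ^ q = 1` holds exactly for the `p`-elements `z`, every `q`-th power is
`p`-regular, and `x ^ q = x` for `p`-regular `x`. For such `x`, the roots of `y ^ q = x` all commute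
with `x`, and `y ↦ y * x⁻¹` maps them bijectively onto the `p`-elements of the centralizer of `x`.
-/

def rootsEquivCentralizerRootsOfUnity {G : Type*} [Group G] {n : ℕ} {x : G} (hx : x ^ n = x) :
    {y : G | y ^ n = x} ≃ {z : G | z ∈ Subgroup.centralizer {x} ∧ z ^ n = 1} where
  toFun y :=
    have hyx : Commute y.1 x := y.2.subst (motive := Commute y.1) (Commute.self_pow y.1 n)
    ⟨y * x⁻¹, Subgroup.mem_centralizer_singleton_iff.2 (hyx.mul_left (Commute.inv_left rfl)),
      by rw [hyx.inv_right.mul_pow, y.2, inv_pow, hx, mul_inv_cancel]⟩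
  invFun z :=
    have hzx : Commute z.1 x := Subgroup.mem_centralizer_singleton_iff.1 z.2.1
    ⟨z * x, show (z.1 * x) ^ n = x by rw [hzx.mul_pow, z.2.2, hx, one_mul]⟩
  left_inv y := Subtype.ext (inv_mul_cancel_right _ _)
  right_inv z := Subtype.ext (mul_inv_cancel_right _ _)

section PowerMap

variable {G : Type*} [Group G] {p q : ℕ}

lemma orderOf_pow_dvd_ordCompl (hdvd : ordProj[p] (Nat.card G) ∣ q) (y : G) :
    orderOf (y ^ q) ∣ ordCompl[p] (Nat.card G) := by
  refine orderOf_dvd_of_pow_eq_one ?_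
  rw [← pow_mul, ← orderOf_dvd_iff_pow_eq_one]
  refine (orderOf_dvd_natCard y).trans ?_
  calc Nat.card G = ordProj[p] (Nat.card G) * ordCompl[p] (Nat.card G) :=
        (Nat.ordProj_mul_ordCompl_eq_self _ p).symm
    _ ∣ q * ordCompl[p] (Nat.card G) := mul_dvd_mul_right hdvd _

lemma orderOf_dvd_ordCompl_of_coprime {x : G} (hx : (orderOf x).Coprime p) :
    orderOf x ∣ ordCompl[p] (Nat.card G) := by
  refine (hx.pow_right ((Nat.card G).factorization p)).dvd_of_dvd_mul_left ?_
  rw [Nat.ordProj_mul_ordCompl_eq_self]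
  exact orderOf_dvd_natCard x

lemma pow_eq_self_of_coprime (hmod : q ≡ 1 [MOD ordCompl[p] (Nat.card G)]) {x : G}
    (hx : (orderOf x).Coprime p) : x ^ q = x :=
  (pow_eq_pow_iff_modEq.2 (hmod.of_dvd (orderOf_dvd_ordCompl_of_coprime hx))).trans (pow_one x)

lemma pow_eq_one_iff_exists_orderOf_eq_pow [Finite G] (hp : p.Prime)
    (hdvd : ordProj[p] (Nat.card G) ∣ q) (hmod : q ≡ 1 [MOD ordCompl[p] (Nat.card G)]) (z : G) :
    z ^ q = 1 ↔ ∃ k : ℕ, orderOf z = p ^ k := by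
  constructor
  · intro hz
    have hq : q.Coprime (ordCompl[p] (Nat.card G)) := by
      rw [Nat.Coprime, hmod.gcd_eq, Nat.gcd_one_left]
    have hzp : orderOf z ∣ ordProj[p] (Nat.card G) := by
      refine (hq.coprime_dvd_left (orderOf_dvd_of_pow_eq_one hz)).dvd_of_dvd_mul_right ?_
      rw [Nat.ordProj_mul_ordCompl_eq_self]
      exact orderOf_dvd_natCard z
    obtain ⟨k, -, hk⟩ := (Nat.dvd_prime_pow hp).1 hzp
    exact ⟨k, hk⟩
  · rintro ⟨k, hk⟩
    rw [← orderOf_dvd_iff_pow_eq_one, hk]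
    exact ((hp.pow_dvd_iff_dvd_ordProj Nat.card_pos.ne').1 (hk ▸ orderOf_dvd_natCard z)).trans hdvd

end PowerMap

theorem stmt_3_general (G : Type*) [Group G] [Finite G] (p : ℕ) (hp : p.Prime)
    (q : ℕ)
    (hdvd : p ^ ((Nat.card G).factorization p) ∣ q)
    (hmod : q ≡ 1 [MOD (Nat.card G) / p ^ ((Nat.card G).factorization p)]) (x : G) :
    (p ∣ orderOf x → Nat.card {y : G | y ^ q = x} = 0) ∧
    (Nat.Coprime (orderOf x) p →
      Nat.card {y : G | y ^ q = x} =
        Nat.card {z : G | z ∈ Subgroup.centralizer {x} ∧ ∃ k : ℕ, orderOf z = p ^ k}) := by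
  constructor
  · refine fun hpx => Nat.card_eq_zero.2 (.inl ⟨fun ⟨y, hy⟩ => ?_⟩)
    have hx : orderOf x ∣ ordCompl[p] (Nat.card G) := hy ▸ orderOf_pow_dvd_ordCompl hdvd y
    exact Nat.not_dvd_ordCompl hp Nat.card_pos.ne' (hpx.trans hx)
  · intro hx
    rw [Nat.card_congr (rootsEquivCentralizerRootsOfUnity (pow_eq_self_of_coprime hmod hx))]
    simp_rw [pow_eq_one_iff_exists_orderOf_eq_pow hp hdvd hmod]

theorem stmt_3 (G : Type*) [Group G] [Finite G] (p : ℕ) (hp : p.Prime)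
    (q : ℕ) (hq : ∃ a : ℕ, q = p ^ a)
    (hdvd : p ^ ((Nat.card G).factorization p) ∣ q)
    (hmod : q ≡ 1 [MOD (Nat.card G) / p ^ ((Nat.card G).factorization p)]) (x : G) :
    (p ∣ orderOf x → Nat.card {y : G | y ^ q = x} = 0) ∧
    (Nat.Coprime (orderOf x) p →
      Nat.card {y : G | y ^ q = x} =
        Nat.card {z : G | z ∈ Subgroup.centralizer {x} ∧ ∃ k : ℕ, orderOf z = p ^ k}) :=
  stmt_3_general G p hp q hdvd hmod x
end

section
/- Let G be a finite group and p a prime. Then |G| equals the sum, over a set of representatives y of the conjugacy classes of p-regular elements of G, of [G : C_G(y)] times the number of p-elements of C_G(y). -/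
open Subgroup Finset

/-!
Write `orderOf g = p ^ a * m` with `p ∤ m`. A Bézout relation `p ^ a * u + m * v = 1` splits `g`
as `g ^ (p ^ a * u) * g ^ (m * v)`, a product of commuting powers of `g`, the first `p`-regular
and the second a `p`-element; and such a splitting of `g` into commuting factors is unique.
Hence `g ↦ (y, z)` identifies `G` with the pairs of a `p`-regular `y` and a `p`-element `z` of
`C_G(y)`. The number of such `z` only depends on the conjugacy class of `y`, which has
`[G : C_G(y)]` elements.
-/

section

variable {G : Type*} [Group G] {p : ℕ}

noncomputable def pRegularPart (p : ℕ) (g : G) : G :=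
  g ^ (((ordProj[p] (orderOf g) : ℕ) : ℤ) *
    Nat.gcdA (ordProj[p] (orderOf g)) (ordCompl[p] (orderOf g)))

noncomputable def pPart (p : ℕ) (g : G) : G :=
  g ^ (((ordCompl[p] (orderOf g) : ℕ) : ℤ) *
    Nat.gcdB (ordProj[p] (orderOf g)) (ordCompl[p] (orderOf g)))

lemma zpow_mul_pow_eq_one_of_orderOf_dvd {g : G} {a b : ℕ} (hab : orderOf g ∣ a * b) (k : ℤ) :
    (g ^ ((a : ℤ) * k)) ^ b = 1 := by
  rw [← zpow_natCast, ← zpow_mul, ← orderOf_dvd_iff_zpow_eq_one, mul_right_comm]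
  exact (Int.natCast_dvd_natCast.mpr hab).trans ⟨k, by push_cast; ring⟩

lemma pRegularPart_mul_pPart (hp : p.Prime) {g : G} (hg : IsOfFinOrder g) :
    pRegularPart p g * pPart p g = g := by
  have hcop : (ordProj[p] (orderOf g)).Coprime (ordCompl[p] (orderOf g)) :=
    (Nat.coprime_ordCompl hp hg.orderOf_pos.ne').pow_left _
  rw [pRegularPart, pPart, ← zpow_add, ← Nat.gcd_eq_gcd_ab, hcop, Nat.cast_one, zpow_one]

lemma coprime_orderOf_pRegularPart (hp : p.Prime) {g : G} (hg : IsOfFinOrder g) :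
    (orderOf (pRegularPart p g)).Coprime p := by
  refine Nat.Coprime.coprime_dvd_left (orderOf_dvd_of_pow_eq_one ?_)
    (Nat.coprime_ordCompl hp hg.orderOf_pos.ne').symm
  exact zpow_mul_pow_eq_one_of_orderOf_dvd (Nat.ordProj_mul_ordCompl_eq_self _ _).symm.dvd _

lemma exists_orderOf_pPart_eq_pow (hp : p.Prime) (g : G) :
    ∃ k : ℕ, orderOf (pPart p g) = p ^ k := by
  have hdvd : orderOf (pPart p g) ∣ ordProj[p] (orderOf g) :=
    orderOf_dvd_of_pow_eq_one <| zpow_mul_pow_eq_one_of_orderOf_dvd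
      (by rw [mul_comm, Nat.ordProj_mul_ordCompl_eq_self]) _
  obtain ⟨k, -, hk⟩ := (Nat.dvd_prime_pow hp).mp hdvd
  exact ⟨k, hk⟩

lemma Commute.pRegularPart_right {x g : G} (h : Commute x g) : Commute x (pRegularPart p g) :=
  h.zpow_right _

lemma Commute.pPart_right {x g : G} (h : Commute x g) : Commute x (pPart p g) :=
  h.zpow_right _

lemma commute_pRegularPart_pPart (p : ℕ) (g : G) : Commute (pRegularPart p g) (pPart p g) :=
  Commute.zpow_zpow_self g _ _

lemma eq_of_mul_eq_mul_of_coprime_of_pow {y y' z z' : G}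
    (hyy' : Commute y y') (hzz' : Commute z z')
    (hy : (orderOf y).Coprime p) (hy' : (orderOf y').Coprime p)
    (hz : ∃ k : ℕ, orderOf z = p ^ k) (hz' : ∃ k : ℕ, orderOf z' = p ^ k)
    (h : y * z = y' * z') : y = y' := by
  obtain ⟨k, hk⟩ := hz
  obtain ⟨k', hk'⟩ := hz'
  have hquot : y'⁻¹ * y = z' * z⁻¹ := by
    rw [inv_mul_eq_iff_eq_mul, ← mul_assoc, eq_mul_inv_iff_mul_eq, h]
  have hcop : (orderOf (y'⁻¹ * y)).Coprime p := by
    refine Nat.Coprime.coprime_dvd_left hyy'.symm.inv_left.orderOf_mul_dvd_mul_orderOf ?_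
    rw [orderOf_inv]
    exact hy'.mul_left hy
  have hpow : orderOf (y'⁻¹ * y) ∣ p ^ (k' + k) := by
    rw [hquot, pow_add, ← hk, ← hk', ← orderOf_inv z]
    exact hzz'.symm.inv_right.orderOf_mul_dvd_mul_orderOf
  have hone : y'⁻¹ * y = 1 := orderOf_eq_one_iff.mp ((hcop.pow_right _).eq_one_of_dvd hpow)
  exact (inv_mul_eq_one.mp hone).symm

lemma pRegularPart_mul_eq_and_pPart_mul_eq (hp : p.Prime) {y z : G} (hyz : Commute y z)
    (hy : (orderOf y).Coprime p) (hz : ∃ k : ℕ, orderOf z = p ^ k) :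
    pRegularPart p (y * z) = y ∧ pPart p (y * z) = z := by
  have hfin : IsOfFinOrder (y * z) := by
    refine hyz.isOfFinOrder_mul (orderOf_pos_iff.mp ?_) (orderOf_pos_iff.mp ?_)
    · exact Nat.pos_of_ne_zero fun h0 => hp.ne_one ((Nat.coprime_zero_left p).mp (h0 ▸ hy))
    · obtain ⟨k, hk⟩ := hz
      exact hk ▸ pow_pos hp.pos k
  have hy_eq : pRegularPart p (y * z) = y :=
    eq_of_mul_eq_mul_of_coprime_of_pow ((Commute.refl y).mul_right hyz).pRegularPart_right.symm
      (hyz.symm.mul_right (Commute.refl z)).pPart_right.symm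
      (coprime_orderOf_pRegularPart hp hfin) hy (exists_orderOf_pPart_eq_pow hp _) hz
      (pRegularPart_mul_pPart hp hfin)
  have hmul := pRegularPart_mul_pPart hp hfin
  rw [hy_eq] at hmul
  exact ⟨hy_eq, mul_left_cancel hmul⟩

def centralizerPElements (p : ℕ) (x : G) : Set G :=
  {z | z ∈ centralizer {x} ∧ ∃ k : ℕ, orderOf z = p ^ k}

noncomputable def pDecompositionEquiv (hp : p.Prime) (hG : IsMulTorsion G) :
    G ≃ Σ x : {x : G // (orderOf x).Coprime p}, centralizerPElements p x.1 where
  toFun g := ⟨⟨pRegularPart p g, coprime_orderOf_pRegularPart hp (hG g)⟩, pPart p g,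
    mem_centralizer_singleton_iff.mpr (commute_pRegularPart_pPart p g).symm.eq,
    exists_orderOf_pPart_eq_pow hp g⟩
  invFun xz := xz.1.1 * xz.2.1
  left_inv g := pRegularPart_mul_pPart hp (hG g)
  right_inv := by
    rintro ⟨⟨x, hx⟩, z, hzx, hz⟩
    have hxz := pRegularPart_mul_eq_and_pPart_mul_eq hp
      (mem_centralizer_singleton_iff.mp hzx).symm hx hz
    exact Sigma.subtype_ext (Subtype.ext hxz.1) hxz.2

lemma card_eq_sum_card_centralizerPElements (hp : p.Prime) [Fintype G] :
    Nat.card G = ∑ x ∈ univ.filter (fun x : G => (orderOf x).Coprime p),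
      Nat.card (centralizerPElements p x) := by
  rw [Nat.card_congr (pDecompositionEquiv hp fun g => isOfFinOrder_of_finite g), Nat.card_sigma,
    Finset.sum_subtype _ (fun x => mem_filter_univ x)]

lemma index_centralizer_singleton_eq_card_isConj (g : G) :
    (centralizer {g}).index = Nat.card {x // IsConj g x} := by
  rw [centralizer_eq_comap_stabilizer]
  refine (index_comap_of_surjective _ ConjAct.toConjAct.surjective).trans ?_
  rw [MulAction.index_stabilizer, ← Nat.card_coe_set_eq]
  exact Nat.card_congr <|
    Equiv.subtypeEquivRight fun x => ConjAct.mem_orbit_conjAct.trans isConj_comm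

lemma card_centralizerPElements_of_isConj {x y : G} (h : IsConj y x) :
    Nat.card (centralizerPElements p x) = Nat.card (centralizerPElements p y) := by
  obtain ⟨c, hc⟩ := isConj_iff.mp h
  obtain rfl : MulAut.conj c y = x := hc
  refine (Nat.card_congr ((MulAut.conj c).toEquiv.subtypeEquiv fun z => ?_)).symm
  simp only [centralizerPElements, Set.mem_ofPred_eq, mem_centralizer_singleton_iff,
    MulEquiv.toEquiv_eq_coe, MulEquiv.coe_toEquiv, MulEquiv.orderOf_eq, ← map_mul,
    EmbeddingLike.apply_eq_iff_eq]

lemma sum_filter_eq_sum_index_centralizer_smul [Fintype G] {M : Type*} [AddCommMonoid M]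
    (P : G → Prop) [DecidablePred P] (T : Finset G) (hP : ∀ y x, IsConj y x → P y → P x)
    (hT : ∀ y ∈ T, P y) (hrep : ∀ x, P x → ∃! y, y ∈ T ∧ IsConj y x)
    (φ : G → M) (hφ : ∀ y x, IsConj y x → φ x = φ y) :
    ∑ x ∈ univ.filter P, φ x = ∑ y ∈ T, (centralizer {y}).index • φ y := by
  classical
  have hsingle : ∀ x ∈ univ.filter P, φ x = ∑ y ∈ T, if IsConj y x then φ y else 0 := by
    intro x hx
    obtain ⟨y, ⟨hyT, hyx⟩, huniq⟩ := hrep x (mem_filter.mp hx).2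
    rw [Finset.sum_eq_single_of_mem y hyT
      fun y' hy'T hne => if_neg fun h => hne (huniq y' ⟨hy'T, h⟩), if_pos hyx, hφ y x hyx]
  have hclass : ∀ y ∈ T, (univ.filter P).filter (IsConj y) = univ.filter (IsConj y) := by
    intro y hy
    rw [Finset.filter_filter]
    exact Finset.filter_congr fun x _ => ⟨fun h => h.2, fun h => ⟨hP y x h (hT y hy), h⟩⟩
  rw [Finset.sum_congr rfl hsingle, Finset.sum_comm]
  refine Finset.sum_congr rfl fun y hy => ?_
  rw [← Finset.sum_filter, hclass y hy, Finset.sum_const,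
    index_centralizer_singleton_eq_card_isConj, ← Fintype.card_subtype, Nat.card_eq_fintype_card]

end

theorem stmt_5_general (G : Type*) [Group G] [Fintype G]
    (p : ℕ) (hp : p.Prime) (T : Finset G)
    (hreg : ∀ y ∈ T, Nat.Coprime (orderOf y) p)
    (hrep : ∀ g : G, Nat.Coprime (orderOf g) p → ∃! y, y ∈ T ∧ IsConj y g) :
    Nat.card G = ∑ y ∈ T, (Subgroup.centralizer {y}).index *
      Nat.card {z : G | z ∈ Subgroup.centralizer {y} ∧ ∃ k : ℕ, orderOf z = p ^ k} := by
  rw [card_eq_sum_card_centralizerPElements hp,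
    sum_filter_eq_sum_index_centralizer_smul _ T
      (fun y x ⟨c, hc⟩ hy => hc.orderOf_eq ▸ hy) hreg hrep _
      fun y x h => card_centralizerPElements_of_isConj h]
  simp only [smul_eq_mul, centralizerPElements]

theorem stmt_5 (G : Type*) [Group G] [Finite G] [Fintype G] [DecidableEq G]
    (p : ℕ) (hp : p.Prime) (T : Finset G)
    (hreg : ∀ y ∈ T, Nat.Coprime (orderOf y) p)
    (hrep : ∀ g : G, Nat.Coprime (orderOf g) p → ∃! y, y ∈ T ∧ IsConj y g) :
    Nat.card G = ∑ y ∈ T, (Subgroup.centralizer {y}).index *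
      Nat.card {z : G | z ∈ Subgroup.centralizer {y} ∧ ∃ k : ℕ, orderOf z = p ^ k} :=
  stmt_5_general G p hp T hreg hrep
end

section
/- Let G be a finite group with a normal Sylow p-subgroup P and complement H, and let χ be the permutation character Ind_H^G(1) of G acting on the cosets of H. Then χ(y) = |C_P(y)| for every y ∈ H. -/
/-! A normal complement `N` of `H` is a transversal of `G ⧸ H`, via `n ↦ nH`. Under this
identification `y ∈ H` acts by conjugation, since `y n H = (y n y⁻¹) H`, so the cosets fixed
by `y` correspond to the elements of `N` commuting with `y`. -/

namespace Subgroup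

variable {G : Type*} [Group G] {N H : Subgroup G}

theorem isComplement'_of_inf_eq_bot_of_sup_eq_top [N.Normal] (hinf : H ⊓ N = ⊥)
    (hsup : H ⊔ N = ⊤) : N.IsComplement' H := by
  refine isComplement'_of_disjoint_and_mul_eq_univ ?_ ?_
  · rw [disjoint_iff, inf_comm, hinf]
  · rw [← normal_mul, sup_comm, hsup, coe_top]

theorem smul_mk_eq_mk_conj {y : G} (hy : y ∈ H) (n : G) :
    y • (n : G ⧸ H) = ((y * n * y⁻¹ : G) : G ⧸ H) := by
  rw [MulAction.Quotient.smul_coe, smul_eq_mul, QuotientGroup.eq]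
  simpa [mul_assoc] using hy

theorem IsComplement'.mk_injOn (hNH : N.IsComplement' H) :
    Set.InjOn (QuotientGroup.mk : G → G ⧸ H) N := fun a ha b hb hab =>
  congrArg Subtype.val <| (isComplement_subgroup_right_iff_bijective.mp hNH).injective
    (a₁ := ⟨a, ha⟩) (a₂ := ⟨b, hb⟩) hab

theorem IsComplement'.smul_mk_eq_mk_iff_mem_centralizer [N.Normal] (hNH : N.IsComplement' H)
    {y : G} (hy : y ∈ H) {n : G} (hn : n ∈ N) :
    y • (n : G ⧸ H) = n ↔ n ∈ centralizer {y} := by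
  rw [smul_mk_eq_mk_conj hy, hNH.mk_injOn.eq_iff (Normal.conj_mem ‹_› n hn y) hn,
    mem_centralizer_singleton_iff, mul_inv_eq_iff_eq_mul, eq_comm]

noncomputable def IsComplement'.centralizerEquivFixedPoints [N.Normal]
    (hNH : N.IsComplement' H) {y : G} (hy : y ∈ H) :
    ↥(N ⊓ centralizer {y}) ≃ {c : G ⧸ H // y • c = c} :=
  (Equiv.subtypeSubtypeEquivSubtypeInter _ _).symm.trans <|
    (Equiv.ofBijective _ (isComplement_subgroup_right_iff_bijective.mp hNH)).subtypeEquiv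
      fun n => (hNH.smul_mk_eq_mk_iff_mem_centralizer hy n.2).symm

end Subgroup

theorem stmt_9_general (G : Type*) [Group G] (p : ℕ)
    (P : Sylow p G) (hPn : (P : Subgroup G).Normal) (H : Subgroup G)
    (hHP : H ⊓ (P : Subgroup G) = ⊥) (hsup : H ⊔ (P : Subgroup G) = ⊤)
    (y : G) (hy : y ∈ H) :
    Nat.card {c : G ⧸ H // y • c = c} =
      Nat.card {x : G | x ∈ (P : Subgroup G) ∧ x ∈ Subgroup.centralizer {y}} :=
  have hPH : (P : Subgroup G).IsComplement' H :=
    Subgroup.isComplement'_of_inf_eq_bot_of_sup_eq_top hHP hsup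
  Nat.card_congr (hPH.centralizerEquivFixedPoints hy).symm

theorem stmt_9 (G : Type*) [Group G] [Finite G] (p : ℕ) (hp : p.Prime)
    (P : Sylow p G) (hPn : (P : Subgroup G).Normal) (H : Subgroup G)
    (hHP : H ⊓ (P : Subgroup G) = ⊥) (hsup : H ⊔ (P : Subgroup G) = ⊤)
    (y : G) (hy : y ∈ H) :
    Nat.card {c : G ⧸ H // y • c = c} =
      Nat.card {x : G | x ∈ (P : Subgroup G) ∧ x ∈ Subgroup.centralizer {y}} :=
  stmt_9_general G p P hPn H hHP hsup y hy
end

section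
/- Let G be a finite group, p a prime, and Z a central subgroup of G of order coprime to p. Then for every p-regular y ∈ G, the number of p-elements of C_G(y) equals the number of p-elements of C_{G/Z}(yZ). -/
/-!
Reduction modulo `Z` is a bijection between the `p`-elements of `C_G(y)` and those of
`C_{G/Z}(yZ)`. Since `Z` is central of order prime to `p`, an element of `Z` that is the
quotient of two `p`-elements is itself a `p`-element, hence trivial; this gives injectivity, and shows that a `p`-element
commuting with `y` modulo `Z` commutes with `y` (apply this to `yxy⁻¹` and `x`).
A `p`-element `w` of `G/Z` lifts to a `p`-element: if `g` lifts `w`, then `g ^ (|Z| m)`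
also lifts `w` for a suitable `m` and is killed by the order of `w`.
-/

section

variable {G : Type*} [Group G]

def pElementsCentralizer (p : ℕ) (y : G) : Set G :=
  {z | z ∈ Subgroup.centralizer {y} ∧ ∃ k : ℕ, orderOf z = p ^ k}

variable {p : ℕ} [hp : Fact p.Prime]

theorem mem_pElementsCentralizer_iff {y z : G} :
    z ∈ pElementsCentralizer p y ↔ Commute z y ∧ ∃ m : ℕ, z ^ p ^ m = 1 := by
  rw [pElementsCentralizer, Set.mem_ofPred_eq, Subgroup.mem_centralizer_singleton_iff,
    exists_orderOf_eq_prime_pow_iff]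
  rfl

theorem mapsTo_pElementsCentralizer {H : Type*} [Group H] (f : G →* H) (y : G) :
    Set.MapsTo f (pElementsCentralizer p y) (pElementsCentralizer p (f y)) := by
  intro z hz
  obtain ⟨hzy, m, hzm⟩ := mem_pElementsCentralizer_iff.mp hz
  exact mem_pElementsCentralizer_iff.mpr ⟨hzy.map f, m, by rw [← map_pow, hzm, map_one]⟩

variable {Z : Subgroup G}

theorem Subgroup.eq_one_of_pow_prime_pow_eq_one (hZp : ¬ p ∣ Nat.card Z) {c : G} (hc : c ∈ Z)
    {m : ℕ} (hcm : c ^ p ^ m = 1) : c = 1 := by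
  have hcop : Nat.Coprime (p ^ m) (Nat.card Z) :=
    ((Nat.Prime.coprime_iff_not_dvd hp.out).mpr hZp).pow_left m
  exact orderOf_eq_one_iff.mp <| Nat.dvd_one.mp <| hcop.gcd_eq_one ▸
    Nat.dvd_gcd (orderOf_dvd_of_pow_eq_one hcm) (Z.orderOf_dvd_natCard hc)

theorem Subgroup.eq_one_of_mul_pow_prime_pow_eq_one (hZ : Z ≤ Subgroup.center G)
    (hZp : ¬ p ∣ Nat.card Z) {c x : G} (hc : c ∈ Z) {m n : ℕ} (hx : x ^ p ^ m = 1)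
    (hcx : (c * x) ^ p ^ n = 1) : c = 1 := by
  have hcomm : Commute c x := Subgroup.mem_center_iff.mp (hZ hc) x |>.symm
  refine Z.eq_one_of_pow_prime_pow_eq_one hZp hc (m := m + n) ?_
  have hx' : x ^ p ^ (m + n) = 1 := by rw [pow_add, pow_mul, hx, one_pow]
  have hcx' : (c * x) ^ p ^ (m + n) = 1 := by rw [pow_add, mul_comm, pow_mul, hcx, one_pow]
  rwa [hcomm.mul_pow, hx', mul_one] at hcx'

variable [Z.Normal]

theorem QuotientGroup.eq_of_mk_eq_of_pow_prime_pow_eq_one (hZ : Z ≤ Subgroup.center G)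
    (hZp : ¬ p ∣ Nat.card Z) {z₁ z₂ : G} {m₁ m₂ : ℕ} (h₁ : z₁ ^ p ^ m₁ = 1)
    (h₂ : z₂ ^ p ^ m₂ = 1) (h : (z₁ : G ⧸ Z) = z₂) : z₁ = z₂ := by
  have hc : z₂ / z₁ ∈ Z := QuotientGroup.eq_iff_div_mem.mp h.symm
  have h₂' : (z₂ / z₁ * z₁) ^ p ^ m₂ = 1 := by rwa [div_mul_cancel]
  rw [← div_mul_cancel z₂ z₁,
    Z.eq_one_of_mul_pow_prime_pow_eq_one hZ hZp hc h₁ h₂', one_mul]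

theorem QuotientGroup.commute_of_commute_mk (hZ : Z ≤ Subgroup.center G)
    (hZp : ¬ p ∣ Nat.card Z) {x y : G} {m : ℕ} (hx : x ^ p ^ m = 1)
    (hxy : Commute (x : G ⧸ Z) (y : G ⧸ Z)) : Commute x y := by
  have hc : y * x * y⁻¹ * x⁻¹ ∈ Z := by
    rw [← QuotientGroup.eq_one_iff, QuotientGroup.mk_mul, QuotientGroup.mk_mul,
      QuotientGroup.mk_mul, QuotientGroup.mk_inv, QuotientGroup.mk_inv, ← hxy.eq,
      mul_inv_cancel_right, mul_inv_cancel]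
  have hconj : (y * x * y⁻¹ * x⁻¹ * x) ^ p ^ m = 1 := by
    rw [inv_mul_cancel_right, conj_pow, hx, mul_one, mul_inv_cancel]
  have hc1 := Z.eq_one_of_mul_pow_prime_pow_eq_one hZ hZp hc hx hconj
  rw [mul_inv_eq_one, mul_inv_eq_iff_eq_mul] at hc1
  exact hc1.symm

theorem QuotientGroup.exists_mk_eq_of_pow_prime_pow_eq_one (hZp : ¬ p ∣ Nat.card Z)
    {w : G ⧸ Z} {k : ℕ} (hw : w ^ p ^ k = 1) : ∃ x : G, x ^ p ^ k = 1 ∧ (x : G ⧸ Z) = w := by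
  obtain ⟨g, rfl⟩ := QuotientGroup.mk_surjective w
  have hcop : Nat.Coprime (Nat.card Z) (orderOf (g : G ⧸ Z)) :=
    (((Nat.Prime.coprime_iff_not_dvd hp.out).mpr hZp).symm.pow_right k).coprime_dvd_right
      (orderOf_dvd_of_pow_eq_one hw)
  obtain ⟨t, ht⟩ := exists_pow_eq_self_of_coprime hcop
  have hgZ : g ^ p ^ k ∈ Z := by rwa [← QuotientGroup.eq_one_iff, QuotientGroup.mk_pow]
  have hgN : (g ^ p ^ k) ^ Nat.card Z = 1 :=
    congrArg Subtype.val (pow_card_eq_one' (x := (⟨_, hgZ⟩ : Z)))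
  refine ⟨(g ^ Nat.card Z) ^ t, ?_, by rwa [QuotientGroup.mk_pow, QuotientGroup.mk_pow]⟩
  rw [← pow_mul, ← pow_mul, show Nat.card Z * (t * p ^ k) = p ^ k * Nat.card Z * t by ring,
    pow_mul, pow_mul, hgN, one_pow]

theorem QuotientGroup.bijOn_mk_pElementsCentralizer
    (hZ : Z ≤ Subgroup.center G) (hZp : ¬ p ∣ Nat.card Z) (y : G) :
    Set.BijOn ((↑) : G → G ⧸ Z) (pElementsCentralizer p y)
      (pElementsCentralizer p (y : G ⧸ Z)) := by
  refine ⟨mapsTo_pElementsCentralizer (QuotientGroup.mk' Z) y, ?_, ?_⟩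
  · intro z₁ hz₁ z₂ hz₂ h
    obtain ⟨-, m₁, h₁⟩ := mem_pElementsCentralizer_iff.mp hz₁
    obtain ⟨-, m₂, h₂⟩ := mem_pElementsCentralizer_iff.mp hz₂
    exact QuotientGroup.eq_of_mk_eq_of_pow_prime_pow_eq_one hZ hZp h₁ h₂ h
  · intro w hw
    obtain ⟨hwy, k, hwk⟩ := mem_pElementsCentralizer_iff.mp hw
    obtain ⟨x, hxk, rfl⟩ := QuotientGroup.exists_mk_eq_of_pow_prime_pow_eq_one hZp hwk
    exact ⟨x, mem_pElementsCentralizer_iff.mpr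
      ⟨QuotientGroup.commute_of_commute_mk hZ hZp hxk hwy, k, hxk⟩, rfl⟩

end

theorem stmt_11_general (G : Type*) [Group G] (p : ℕ) (hp : p.Prime)
    (Z : Subgroup G) [Z.Normal] (hZ : Z ≤ Subgroup.center G) (hZp : ¬ p ∣ Nat.card Z)
    (y : G) :
    Nat.card {z : G | z ∈ Subgroup.centralizer {y} ∧ ∃ k : ℕ, orderOf z = p ^ k} =
      Nat.card {w : G ⧸ Z | w ∈ Subgroup.centralizer {(y : G ⧸ Z)} ∧
        ∃ k : ℕ, orderOf w = p ^ k} :=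
  haveI := Fact.mk hp
  Nat.card_congr ((QuotientGroup.bijOn_mk_pElementsCentralizer hZ hZp y).equiv _)

theorem stmt_11 (G : Type*) [Group G] [Finite G] (p : ℕ) (hp : p.Prime)
    (Z : Subgroup G) [Z.Normal] (hZ : Z ≤ Subgroup.center G) (hZp : ¬ p ∣ Nat.card Z)
    (y : G) (hy : Nat.Coprime (orderOf y) p) :
    Nat.card {z : G | z ∈ Subgroup.centralizer {y} ∧ ∃ k : ℕ, orderOf z = p ^ k} =
      Nat.card {w : G ⧸ Z | w ∈ Subgroup.centralizer {(y : G ⧸ Z)} ∧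
        ∃ k : ℕ, orderOf w = p ^ k} :=
  stmt_11_general G p hp Z hZ hZp y
end

section
/- Let G be a finite group with cyclic Sylow p-subgroup P of order greater than 1, and suppose O_p(G) = 1. Let Ω be the unique subgroup of P of order p. Then N = N_G(Ω) is a proper subgroup of G, and N is strongly p-embedded in G: p divides |N| and p does not divide |N ∩ N^g| for all g ∈ G \ N. -/
/-!
Two subgroups of order `p`, one normalizing the other, generate a `p`-group, hence lie in a
common Sylow `p`-subgroup; since Sylow `p`-subgroups are cyclic, they coincide. So `Ω` is the
only subgroup of order `p` of `N = N_G(Ω)`, and likewise `Ω^g` is the only one of `N^g`. A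
subgroup of order `p` in `N ∩ N^g` would then force `Ω^g = Ω`, i.e. `g ∈ N`. Finally `N ≠ G`
because otherwise `Ω` would be a nontrivial normal `p`-subgroup.
-/

open Subgroup

theorem IsCyclic.subgroup_eq_of_card_eq {α : Type*} [Group α] [Finite α] [IsCyclic α]
    {H K : Subgroup α} (hHK : Nat.card H = Nat.card K) : H = K := by
  classical
  have : Fintype α := Fintype.ofFinite α
  set n := Nat.card H
  -- A subgroup of order `n` lies in `{x | x ^ n = 1}`, which has at most `n` elements.
  have toFinset_eq : ∀ L : Subgroup α, Nat.card L = n →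
      (L : Set α).toFinset = Finset.univ.filter (· ^ n = 1) := by
    intro L hL
    refine Finset.eq_of_subset_of_card_le (fun x hx ↦ ?_) ?_
    · rw [Set.mem_toFinset, SetLike.mem_coe] at hx
      rw [Finset.mem_filter, ← hL]
      exact ⟨Finset.mem_univ x, congrArg Subtype.val (pow_card_eq_one' (x := (⟨x, hx⟩ : L)))⟩
    · rw [Set.toFinset_card, ← Nat.card_eq_fintype_card]
      change _ ≤ Nat.card L
      exact hL ▸ IsCyclic.card_pow_eq_one_le Nat.card_pos
  exact SetLike.coe_injective <| Set.toFinset_inj.mp <|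
    (toFinset_eq H rfl).trans (toFinset_eq K hHK.symm).symm

section CyclicSylow

variable {G : Type*} [Group G] [Finite G] {p : ℕ} [Fact p.Prime]

theorem Sylow.isCyclic_of_isCyclic (P Q : Sylow p G) [IsCyclic P] : IsCyclic Q :=
  (P.equiv Q).isCyclic.mp inferInstance

theorem Subgroup.exists_le_card_eq_prime (H : Subgroup G) (hdvd : p ∣ Nat.card H) :
    ∃ A ≤ H, Nat.card A = p := by
  obtain ⟨z, hz⟩ := exists_prime_orderOf_dvd_card' p hdvd
  exact ⟨zpowers (z : G), (zpowers_le (H := H)).mpr z.2, by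
    rw [Nat.card_zpowers, orderOf_coe, hz]⟩

theorem eq_of_card_eq_prime_of_le_normalizer (P : Sylow p G) [IsCyclic P]
    {A B : Subgroup G} (hA : Nat.card A = p) (hB : Nat.card B = p)
    (hAB : A ≤ normalizer (B : Set G)) : A = B := by
  have hApg : IsPGroup p A := .of_card (n := 1) (by rw [hA, pow_one])
  have hBpg : IsPGroup p B := .of_card (n := 1) (by rw [hB, pow_one])
  obtain ⟨S, hS⟩ := (hApg.to_sup_of_normal_right' hBpg hAB).exists_le_sylow
  have := P.isCyclic_of_isCyclic S
  have hAS : A ≤ S := le_sup_left.trans hS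
  have hBS : B ≤ S := le_sup_right.trans hS
  have hsub : A.subgroupOf S = B.subgroupOf S := IsCyclic.subgroup_eq_of_card_eq <| by
    rw [Nat.card_congr (subgroupOfEquivOfLe hAS).toEquiv,
      Nat.card_congr (subgroupOfEquivOfLe hBS).toEquiv, hA, hB]
  rwa [subgroupOf_inj, inf_eq_left.mpr hAS, inf_eq_left.mpr hBS] at hsub

end CyclicSylow

theorem stmt_15_general (G : Type*) [Group G] [Finite G] (p : ℕ) (hp : p.Prime)
    (P : Sylow p G) (hcyc : IsCyclic (P : Subgroup G))
    (hOp : ∀ Q : Subgroup G, Q.Normal → IsPGroup p Q → Q = ⊥)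
    (Ω : Subgroup G) (hΩ : Nat.card Ω = p) :
    Subgroup.normalizer ((Ω : Subgroup G) : Set G) ≠ ⊤ ∧
    p ∣ Nat.card (Subgroup.normalizer (Ω : Set G)) ∧
    ∀ g : G, g ∉ Subgroup.normalizer (Ω : Set G) →
      ¬ p ∣ Nat.card
        (Subgroup.normalizer (Ω : Set G) ⊓ ((Subgroup.normalizer (Ω : Set G)).map (MulAut.conj g).toMonoidHom) : Subgroup G) := by
  have := Fact.mk hp
  refine ⟨fun htop ↦ ?_, hΩ ▸ card_dvd_of_le le_normalizer, fun g hg hdvd ↦ hg ?_⟩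
  · have hbot := hOp Ω (normalizer_eq_top_iff.mp htop) (.of_card (n := 1) (by rw [hΩ, pow_one]))
    rw [hbot, card_bot] at hΩ
    exact hp.one_lt.ne hΩ
  · obtain ⟨A, hA, hAcard⟩ := exists_le_card_eq_prime _ hdvd
    have hΩg : Nat.card (Ω.map (MulAut.conj g).toMonoidHom) = p :=
      (card_map_of_injective (MulAut.conj g).injective).trans hΩ
    have hAΩ : A = Ω :=
      eq_of_card_eq_prime_of_le_normalizer P hAcard hΩ (hA.trans inf_le_left)
    have hAΩg : A = Ω.map (MulAut.conj g).toMonoidHom :=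
      eq_of_card_eq_prime_of_le_normalizer P hAcard hΩg
        (map_equiv_normalizer_eq Ω (MulAut.conj g) ▸ hA.trans inf_le_right)
    exact mem_normalizer_iff_map_conj_eq.mpr (hAΩg.symm.trans hAΩ)

theorem stmt_15 (G : Type*) [Group G] [Finite G] (p : ℕ) (hp : p.Prime)
    (P : Sylow p G) (hcyc : IsCyclic (P : Subgroup G)) (hP1 : 1 < Nat.card (P : Subgroup G))
    (hOp : ∀ Q : Subgroup G, Q.Normal → IsPGroup p Q → Q = ⊥)
    (Ω : Subgroup G) (hΩle : Ω ≤ (P : Subgroup G)) (hΩ : Nat.card Ω = p) :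
    Subgroup.normalizer ((Ω : Subgroup G) : Set G) ≠ ⊤ ∧
    p ∣ Nat.card (Subgroup.normalizer (Ω : Set G)) ∧
    ∀ g : G, g ∉ Subgroup.normalizer (Ω : Set G) →
      ¬ p ∣ Nat.card
        (Subgroup.normalizer (Ω : Set G) ⊓ ((Subgroup.normalizer (Ω : Set G)).map (MulAut.conj g).toMonoidHom) : Subgroup G) :=
  stmt_15_general G p hp P hcyc hOp Ω hΩ
end

section
/- Let G be a finite group, p a prime, and suppose every nontrivial p-element x of G satisfies: C_G(x) has a normal p-complement. Suppose the Sylow p-subgroups of G are Klein four-groups (elementary abelian of order 4 with p = 2). Then for every involution t ∈ G and every element g of odd order in C_G(t), the element tg has no square root in G. -/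
/-!
Since `t` and `g` commute and have coprime orders, `tg` has order `2m` with `m = |g|` odd. A square
root `y` of `tg` would then have order `4m`, so `y ^ m` would be a 2-element of order 4; but it
lies in a Sylow 2-subgroup, which has exponent 2.
-/

theorem orderOf_eq_two_mul_orderOf_sq {M : Type*} [LeftCancelMonoid M] [Finite M] {x : M}
    (h : Even (orderOf (x ^ 2))) : orderOf x = 2 * orderOf (x ^ 2) := by
  rw [orderOf_pow] at h ⊢
  have hx : 2 ∣ orderOf x := by
    by_contra hodd
    rw [← even_iff_two_dvd, Nat.not_even_iff_odd] at hodd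
    rw [Nat.Coprime.gcd_eq_one (Nat.coprime_two_right.mpr hodd), Nat.div_one] at h
    exact Nat.not_even_iff_odd.mpr hodd h
  rw [Nat.gcd_eq_right hx]
  omega

theorem pow_eq_one_of_forall_sylow {p : ℕ} [Fact p.Prime] {G : Type*} [Group G]
    (hS : ∀ S : Sylow p G, ∀ s ∈ S, s ^ p = 1) {x : G} {k : ℕ} (hx : orderOf x = p ^ k) :
    x ^ p = 1 := by
  have hpx : IsPGroup p (Subgroup.zpowers x) := .of_card (by rw [Nat.card_zpowers, hx])
  obtain ⟨S, hxS⟩ := hpx.exists_le_sylow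
  exact hS S x (hxS (Subgroup.mem_zpowers x))

theorem stmt_17_general (G : Type*) [Group G] [Finite G]
    (hSyl : ∀ S : Sylow 2 G, Nat.card (S : Subgroup G) = 4 ∧
      ∀ s ∈ (S : Subgroup G), s * s = 1)
    (t : G) (ht2 : t * t = 1) (ht1 : t ≠ 1)
    (g : G) (hg : g ∈ Subgroup.centralizer {t}) (hgodd : Odd (orderOf g)) :
    ¬ ∃ y : G, y ^ 2 = t * g := by
  rintro ⟨y, hy⟩
  have ht : orderOf t = 2 := orderOf_eq_prime (by rwa [sq]) ht1
  have htg : orderOf (t * g) = 2 * orderOf g := by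
    have hcomm : Commute t g := (Subgroup.mem_centralizer_singleton_iff.mp hg).symm
    rw [hcomm.orderOf_mul_eq_mul_orderOf_of_coprime (ht ▸ Nat.coprime_two_left.mpr hgodd), ht]
  have hyord : orderOf y = 4 * orderOf g := by
    rw [orderOf_eq_two_mul_orderOf_sq (hy ▸ htg ▸ even_two_mul _), hy, htg]
    ring
  have hz : orderOf (y ^ orderOf g) = 2 ^ 2 := by
    rw [orderOf_pow_of_dvd hgodd.pos.ne' (hyord ▸ dvd_mul_left _ _), hyord,
      Nat.mul_div_cancel _ hgodd.pos]
    norm_num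
  have hdvd := orderOf_dvd_of_pow_eq_one
    (pow_eq_one_of_forall_sylow (fun S s hs => (sq s).trans ((hSyl S).2 s hs)) hz)
  rw [hz] at hdvd
  norm_num at hdvd

theorem stmt_17 (G : Type*) [Group G] [Finite G]
    (hcomp : ∀ x : G, x ≠ 1 → (∃ k : ℕ, orderOf x = 2 ^ k) →
      ∃ N : Subgroup G, N ≤ Subgroup.centralizer {x} ∧
        (∀ h ∈ Subgroup.centralizer {x}, ∀ n ∈ N, h * n * h⁻¹ ∈ N) ∧
        ¬ 2 ∣ Nat.card N ∧
        ∃ k : ℕ, Nat.card (Subgroup.centralizer {x}) / Nat.card N = 2 ^ k)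
    (hSyl : ∀ S : Sylow 2 G, Nat.card (S : Subgroup G) = 4 ∧
      ∀ s ∈ (S : Subgroup G), s * s = 1)
    (t : G) (ht2 : t * t = 1) (ht1 : t ≠ 1)
    (g : G) (hg : g ∈ Subgroup.centralizer {t}) (hgodd : Odd (orderOf g)) :
    ¬ ∃ y : G, y ^ 2 = t * g :=
  stmt_17_general G hSyl t ht2 ht1 g hg hgodd
end

section
/- Let G be a finite group, p a prime, y ∈ G p-regular, and suppose G has a Sylow p-subgroup S. Every solution z of z^{|S|} = y can be written uniquely as z = u·v = v·u, where u is the unique generator of ⟨y⟩ with u^{|S|} = y and v is a p-element of C_G(y). -/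
/-!
Since `|S|` is a power of `p` and `y` is `p`-regular, `x ↦ x ^ |S|` is a bijection of `⟨y⟩`,
so `u` is forced to be the unique `|S|`-th root of `y` in `⟨y⟩`, and then `v = u⁻¹ z`. Both `u`
and `y = z ^ |S|` are powers of `z`, so everything commutes, and
`v ^ |S| = u⁻¹ ^ |S| * z ^ |S| = 1` makes `v` a `p`-element.
-/

open Subgroup

theorem existsUnique_mem_zpowers_pow_eq {G : Type*} [Group G] {y : G} {n : ℕ}
    (h : (orderOf y).Coprime n) : ∃! u, u ∈ zpowers y ∧ u ^ n = y := by
  have hbij := Nat.Coprime.pow_left_bijective (G := zpowers y) (by rwa [Nat.card_zpowers])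
  obtain ⟨⟨u, hu⟩, hu_pow⟩ := hbij.surjective ⟨y, mem_zpowers y⟩
  refine ⟨u, ⟨hu, congrArg Subtype.val hu_pow⟩, ?_⟩
  rintro u' ⟨hu', hu'_pow⟩
  have : (⟨u', hu'⟩ : zpowers y) ^ n = ⟨u, hu⟩ ^ n :=
    Subtype.ext (hu'_pow.trans (congrArg Subtype.val hu_pow).symm)
  exact congrArg Subtype.val (hbij.injective this)

theorem commute_of_mem_zpowers {G : Type*} [Group G] {g a b : G} (ha : a ∈ zpowers g)
    (hb : b ∈ zpowers g) : Commute a b := by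
  obtain ⟨i, rfl⟩ := mem_zpowers_iff.mp ha
  obtain ⟨j, rfl⟩ := mem_zpowers_iff.mp hb
  exact (Commute.refl g).zpow_zpow i j

theorem zpowers_eq_of_mem_zpowers_of_pow_eq {G : Type*} [Group G] {u y : G} {n : ℕ}
    (hu : u ∈ zpowers y) (hy : u ^ n = y) : zpowers u = zpowers y :=
  le_antisymm (zpowers_le.mpr hu) (zpowers_le.mpr (hy ▸ npow_mem_zpowers u n))

theorem exists_orderOf_eq_prime_pow_of_pow_eq_one {G : Type*} [Monoid G] {p k : ℕ} (hp : p.Prime)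
    {v : G} (hv : v ^ p ^ k = 1) : ∃ j : ℕ, orderOf v = p ^ j :=
  let ⟨j, _, hj⟩ := (Nat.dvd_prime_pow hp).mp (orderOf_dvd_of_pow_eq_one hv)
  ⟨j, hj⟩

theorem stmt_19 (G : Type*) [Group G] [Finite G] (p : ℕ) (hp : p.Prime)
    (S : Sylow p G) (y : G) (hy : Nat.Coprime (orderOf y) p)
    (z : G) (hz : z ^ (Nat.card (S : Subgroup G)) = y) :
    ∃! uv : G × G, uv.1 ∈ Subgroup.zpowers y ∧
      Subgroup.zpowers uv.1 = Subgroup.zpowers y ∧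
      uv.1 ^ (Nat.card (S : Subgroup G)) = y ∧
      z = uv.1 * uv.2 ∧ uv.1 * uv.2 = uv.2 * uv.1 ∧
      uv.2 ∈ Subgroup.centralizer {y} ∧ (∃ k : ℕ, orderOf uv.2 = p ^ k) := by
  have : Fact p.Prime := ⟨hp⟩
  obtain ⟨k, hk⟩ := IsPGroup.iff_card.mp S.isPGroup'
  obtain ⟨u, ⟨hu_mem, hu_pow⟩, hu_unique⟩ :=
    existsUnique_mem_zpowers_pow_eq (hk ▸ hy.pow_right k : (orderOf y).Coprime (Nat.card S))
  have hy_mem : y ∈ zpowers z := hz ▸ npow_mem_zpowers z _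
  have hu_z : u ∈ zpowers z := zpowers_le.mpr hy_mem hu_mem
  have hv_z : u⁻¹ * z ∈ zpowers z := mul_mem (inv_mem hu_z) (mem_zpowers z)
  have hv_pow : (u⁻¹ * z) ^ p ^ k = 1 := by
    rw [← hk, (commute_of_mem_zpowers (inv_mem hu_z) (mem_zpowers z)).mul_pow, inv_pow, hu_pow,
      hz, inv_mul_cancel]
  refine ⟨(u, u⁻¹ * z), ⟨hu_mem, zpowers_eq_of_mem_zpowers_of_pow_eq hu_mem hu_pow, hu_pow,
    (mul_inv_cancel_left u z).symm, commute_of_mem_zpowers hu_z hv_z,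
    mem_centralizer_singleton_iff.mpr (commute_of_mem_zpowers hv_z hy_mem),
    exists_orderOf_eq_prime_pow_of_pow_eq_one hp hv_pow⟩, ?_⟩
  rintro ⟨u', v'⟩ ⟨hu'_mem, -, hu'_pow, hz', -⟩
  obtain rfl : u' = u := hu_unique u' ⟨hu'_mem, hu'_pow⟩
  exact Prod.ext rfl (eq_inv_mul_of_mul_eq hz'.symm)
end
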